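/- arXiv:2602.05462 — 5 statements merged into one kernel-verified Lean document; each statement's English description precedes it below -/
import Mathlib

section
/- Let f ∈ 𝔽_{q^m}^{k₁} and g ∈ 𝔽_{q^m}^{k₂} be coefficient vectors of skew polynomials, and let a, β ∈ 𝔽_{q^m}. Then the product rule (f·g)(β)_a = f( g(β)_a )_a holds, where f·g is the skew product and all evaluations are generalized operator evaluations with respect to a. -/
noncomputable section

open Finset

variable {F : Type*} [Field F]

/-- Generalized power function `N_i(a) = ∏_{j<i} σ^j(a)` where `σ(x) = x^e`. -/
def genNorm (e : ℕ) (a : F) (i : ℕ) : F :=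
  ∏ j ∈ Finset.range i, a ^ e ^ j

/-- Generalized operator evaluation of the skew polynomial with coefficient
vector `f` at `b` with respect to `a`, where `σ(x) = x^e`. -/
def opEval (e : ℕ) {k : ℕ} (f : Fin k → F) (a b : F) : F :=
  ∑ i : Fin k, f i * b ^ e ^ (i : ℕ) * genNorm e a i

/-- A coefficient vector as a function `ℕ → F` (zero beyond the length). -/
def coeffFn {k : ℕ} (f : Fin k → F) : ℕ → F :=
  fun i => if h : i < k then f ⟨i, h⟩ else 0

/-- Skew product of coefficient sequences: `(f·g)_n = Σ_{i+j=n} f_i · σ^i(g_j)`,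
where `σ(x) = x^e`. -/
def skewMul (e : ℕ) (f g : ℕ → F) : ℕ → F :=
  fun n => ∑ i ∈ Finset.range (n + 1), f i * g (n - i) ^ e ^ i

/-- `a` and `b` are σ-conjugate, where `σ(x) = x^e`. -/
def IsSigmaConj (e : ℕ) (a b : F) : Prop :=
  ∃ c : F, c ≠ 0 ∧ b = c ^ e * a * c⁻¹

/-- `γ` is a generator of the multiplicative group of `F`. -/
def IsPrimitive (γ : F) : Prop :=
  ∀ x : F, x ≠ 0 → ∃ i : ℕ, γ ^ i = x

/-- Generalized operator evaluation of an `ℕ`-indexed coefficient sequence,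
truncated at length `K`. -/
def opEvalN (e K : ℕ) (f : ℕ → F) (a b : F) : F :=
  ∑ i ∈ Finset.range K, f i * b ^ e ^ i * genNorm e a i

/-- Entry `c` of the `λ × η` matrix `Y` flattened column-wise:
row `c % λ`, column `c / λ`. -/
def matEnt {lam eta : ℕ} (Y : Matrix (Fin lam) (Fin eta) F) (c : ℕ) : F :=
  if h : c % lam < lam ∧ c / lam < eta then Y ⟨c % lam, h.1⟩ ⟨c / lam, h.2⟩ else 0

/-- The `i`-th block of the `λ`-folded linearized Reed–Solomon codeword of `f`:
entry in row `u`, column `v` is `f(γ^{vλ+u})_a`. -/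
def flrsWord (e : ℕ) {k : ℕ} (f : Fin k → F) (γ : F) (lam eta : ℕ) (a : F) :
    Matrix (Fin lam) (Fin eta) F :=
  Matrix.of fun u v => opEval e f a (γ ^ ((v : ℕ) * lam + (u : ℕ)))

/-!
Since `q` is a power of the characteristic, `σ = (· ^ q)` is additive, and
`N_{i+j}(a) = N_i(a) · σ^i(N_j(a))`. Hence expanding `f(g(β)_a)_a` gives the double sum
`∑_{i,j} f_i σ^i(g_j) σ^{i+j}(β) N_{i+j}(a)`, which grouped along the antidiagonals
`i + j = n` is `(f·g)(β)_a`.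
-/

lemma add_pow_pow_of_add_pow {R : Type*} [Semiring R] {e : ℕ}
    (hσ : ∀ x y : R, (x + y) ^ e = x ^ e + y ^ e) (i : ℕ) (x y : R) :
    (x + y) ^ e ^ i = x ^ e ^ i + y ^ e ^ i := by
  induction i with
  | zero => simp
  | succ i ih => rw [pow_succ, pow_mul, pow_mul, pow_mul, ih, hσ]

lemma sum_pow_pow_of_add_pow {R ι : Type*} [Ring R] {e : ℕ}
    (hσ : ∀ x y : R, (x + y) ^ e = x ^ e + y ^ e) (i : ℕ) (s : Finset ι) (u : ι → R) :
    (∑ x ∈ s, u x) ^ e ^ i = ∑ x ∈ s, u x ^ e ^ i :=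
  map_sum (AddMonoidHom.mk' (· ^ e ^ i) (add_pow_pow_of_add_pow hσ i)) u s

lemma sum_triangle_eq_sum_rect {M : Type*} [AddCommMonoid M] {k₁ k₂ K : ℕ}
    (hK : k₁ + k₂ ≤ K + 1) {T : ℕ → ℕ → M} (hT : ∀ i j, T i j ≠ 0 → i < k₁ ∧ j < k₂) :
    ∑ i ∈ range K, ∑ j ∈ range (K - i), T i j = ∑ i ∈ range k₁, ∑ j ∈ range k₂, T i j := by
  rw [← sum_product' (range k₁) (range k₂),
    ← sum_finset_product (f := fun p => T p.1 p.2)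
      ((range K ×ˢ range K).filter fun p => p.1 + p.2 < K) _ _
      (fun p => by simp only [mem_filter, mem_product, mem_range]; omega)]
  refine (sum_subset (fun p hp => ?_) fun p _ hp => ?_).symm
  · simp only [mem_filter, mem_product, mem_range] at hp ⊢
    omega
  · by_contra hne
    exact hp (mem_product.2 (by simpa using hT p.1 p.2 hne))

lemma genNorm_add (e : ℕ) (a : F) (i j : ℕ) :
    genNorm e a (i + j) = genNorm e a i * genNorm e a j ^ e ^ i := by
  unfold genNorm
  rw [prod_range_add, ← prod_pow]
  congr 1
  refine prod_congr rfl fun t _ => ?_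
  rw [← pow_mul, ← pow_add, add_comm]

lemma opEval_eq_opEvalN (e : ℕ) {k : ℕ} (f : Fin k → F) (a b : F) :
    opEval e f a b = opEvalN e k (coeffFn f) a b := by
  unfold opEval opEvalN
  rw [← Fin.sum_univ_eq_sum_range (fun i => coeffFn f i * b ^ e ^ i * genNorm e a i)]
  simp [coeffFn]

lemma opEvalN_skewMul (e K : ℕ) (u v : ℕ → F) (a β : F) :
    opEvalN e K (skewMul e u v) a β =
      ∑ i ∈ range K, ∑ j ∈ range (K - i),
        u i * v j ^ e ^ i * β ^ e ^ (i + j) * genNorm e a (i + j) := by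
  rw [← sum_range_diag_flip]
  refine sum_congr rfl fun n _ => ?_
  rw [skewMul, sum_mul, sum_mul]
  refine sum_congr rfl fun i hi => ?_
  rw [Nat.add_sub_cancel' (Nat.lt_succ_iff.1 (mem_range.1 hi))]

lemma opEvalN_opEvalN {e : ℕ} (hσ : ∀ x y : F, (x + y) ^ e = x ^ e + y ^ e)
    (k₁ k₂ : ℕ) (u v : ℕ → F) (a β : F) :
    opEvalN e k₁ u a (opEvalN e k₂ v a β) =
      ∑ i ∈ range k₁, ∑ j ∈ range k₂,
        u i * v j ^ e ^ i * β ^ e ^ (i + j) * genNorm e a (i + j) := by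
  refine sum_congr rfl fun i _ => ?_
  rw [opEvalN, sum_pow_pow_of_add_pow hσ, mul_sum, sum_mul]
  refine sum_congr rfl fun j _ => ?_
  rw [mul_pow, mul_pow, ← pow_mul, ← pow_add, add_comm j i, genNorm_add]
  ring

theorem opEvalN_skewMul_coeffFn {e : ℕ} (hσ : ∀ x y : F, (x + y) ^ e = x ^ e + y ^ e)
    {k₁ k₂ K : ℕ} (hK : k₁ + k₂ ≤ K + 1) (f : Fin k₁ → F) (g : Fin k₂ → F) (a β : F) :
    opEvalN e K (skewMul e (coeffFn f) (coeffFn g)) a β = opEval e f a (opEval e g a β) := by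
  have he : e ≠ 0 := by
    rintro rfl
    simpa using hσ 0 0
  rw [opEvalN_skewMul, opEval_eq_opEvalN, opEval_eq_opEvalN, opEvalN_opEvalN hσ]
  refine sum_triangle_eq_sum_rect hK fun i j hT => ⟨?_, ?_⟩ <;> by_contra hlt <;> apply hT
  · simp [coeffFn, hlt]
  · simp [coeffFn, hlt, he]

theorem skewMul_opEval_product_rule_general
    {F : Type*} [Field F] [Fintype F]
    (q m : ℕ) (hq : IsPrimePow q)
    (hcard : Fintype.card F = q ^ m)
    (k₁ k₂ : ℕ)
    (f : Fin k₁ → F) (g : Fin k₂ → F) (a β : F) :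
    opEvalN q (k₁ + k₂ - 1) (skewMul q (coeffFn f) (coeffFn g)) a β
      = opEval q f a (opEval q g a β) := by
  obtain ⟨p, s, hp, -, rfl⟩ := (isPrimePow_nat_iff q).1 hq
  have : Fact p.Prime := ⟨hp⟩
  have : CharP F p := charP_of_card_eq_prime_pow (hcard.trans (pow_mul p s m).symm)
  have : ExpChar F p := .prime hp
  exact opEvalN_skewMul_coeffFn (fun x y => add_pow_expChar_pow x y p s) (by omega) f g a β

/-- Product rule for generalized operator evaluation of the
skew product: `(f·g)(β)_a = f(g(β)_a)_a`. -/
theorem skewMul_opEval_product_rule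
    {F : Type*} [Field F] [Fintype F]
    (q m : ℕ) (hq : IsPrimePow q) (hm : 1 ≤ m)
    (hcard : Fintype.card F = q ^ m)
    (k₁ k₂ : ℕ) (hk₁ : 1 ≤ k₁) (hk₂ : 1 ≤ k₂)
    (f : Fin k₁ → F) (g : Fin k₂ → F) (a β : F) :
    opEvalN q (k₁ + k₂ - 1) (skewMul q (coeffFn f) (coeffFn g)) a β
      = opEval q f a (opEval q g a β) :=
  skewMul_opEval_product_rule_general q m hq hcard k₁ k₂ f g a β
end
end

section
/- Let q be a prime power and s, A, m, n, k positive integers, and set V := 𝔽_{q^n}^m, regarded also as an 𝔽_q-vector space of dimension mn. Let H_1,…,H_k be 𝔽_q-linear subspaces of V such that for every 𝔽_{q^n}-linear subspace W ⊆ V with dim_{𝔽_{q^n}} W ≤ s one has Σ_{i=1}^k dim_{𝔽_q}(H_i ∩ W) ≤ A. Let H ⊆ V^k be an (s,m,k)-periodic affine subspace over 𝔽_{q^n}. Then H ∩ (H_1 × ⋯ × H_k) is an affine 𝔽_q-subspace of V^k of 𝔽_q-dimension at most A; in particular it has at most q^A elements. -/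
/-!
If `T` is nonempty and `v ∈ T`, then `T = v + L` with `L = U ∩ ∏ᵢ Hᵢ` (over `𝔽_q`). Filter `L` by
the number of leading zero coordinates: on the `j`-th step the `j`-th coordinate has kernel the
next step, and lands in `H_j ∩ W₀` by periodicity. Hence `dim L ≤ ∑ⱼ dim (H_j ∩ W₀) ≤ A`.
-/

noncomputable section

open Finset

variable {F : Type*} [Field F]

open Module

section PrefixFiltration

variable {K M ι : Type*} [DivisionRing K] [AddCommGroup M] [Module K M] [Module.Finite K M]
  [LinearOrder ι] [Fintype ι]

theorem finrank_le_sum_finrank_of_support_of_prefix_zero (P : ι → Submodule K M)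
    (s : Finset ι) (U : Submodule K (ι → M)) (hsupp : ∀ u ∈ U, ∀ i ∉ s, u i = 0)
    (hU : ∀ u ∈ U, ∀ j, (∀ i < j, u i = 0) → u j ∈ P j) :
    finrank K U ≤ ∑ j ∈ s, finrank K (P j) := by
  classical
  induction s using Finset.induction_on_min generalizing U with
  | empty =>
    have hbot : U = ⊥ := (Submodule.eq_bot_iff U).2 fun u hu =>
      funext fun i => hsupp u hu i (Finset.notMem_empty i)
    simp [hbot]
  | insert a s ha ih =>
    -- Rank–nullity for `u ↦ u a`: since `a` is below all of `s`, every `u ∈ U` vanishes before `a`.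
    let f := (LinearMap.proj (R := K) (φ := fun _ : ι => M) a).domRestrict U
    have hrange : LinearMap.range f ≤ P a := by
      rintro _ ⟨u, rfl⟩
      refine hU u u.2 a fun i hi => hsupp u u.2 i ?_
      simp only [Finset.mem_insert, not_or]
      exact ⟨hi.ne, fun his => (ha i his).not_gt hi⟩
    have hker : finrank K (LinearMap.ker f) ≤ ∑ j ∈ s, finrank K (P j) := by
      rw [← Submodule.finrank_map_subtype_eq]
      refine ih _ ?_ fun u hu => hU u ?_
      · rintro _ ⟨u, hu, rfl⟩ i hi
        by_cases hia : i = a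
        · exact hia ▸ hu
        · exact hsupp u u.2 i (by simp [hia, hi])
      · obtain ⟨u, -, rfl⟩ := hu
        exact u.2
    rw [Finset.sum_insert fun has => (ha a has).false, ← f.finrank_range_add_finrank_ker]
    exact add_le_add (Submodule.finrank_mono hrange) hker

theorem finrank_le_sum_finrank_of_prefix_zero (P : ι → Submodule K M)
    (U : Submodule K (ι → M)) (hU : ∀ u ∈ U, ∀ j, (∀ i < j, u i = 0) → u j ∈ P j) :
    finrank K U ≤ ∑ j, finrank K (P j) :=
  finrank_le_sum_finrank_of_support_of_prefix_zero P _ U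
    (fun _ _ i hi => absurd (Finset.mem_univ i) hi) hU

end PrefixFiltration

theorem setOf_sub_mem_inter_eq {R M : Type*} [Ring R] [AddCommGroup M] [Module R M]
    (U L : Submodule R M) {v₀ v : M} (hv : v - v₀ ∈ U) (hvL : v ∈ L) :
    {x | x - v₀ ∈ U} ∩ L = {x | x - v ∈ U ⊓ L} := by
  ext x
  simp only [Set.mem_inter_iff, Set.mem_ofPred_eq, SetLike.mem_coe, Submodule.mem_inf]
  constructor
  · rintro ⟨hx, hxL⟩
    exact ⟨by simpa using U.sub_mem hx hv, L.sub_mem hxL hvL⟩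
  · rintro ⟨hx, hxL⟩
    exact ⟨by simpa using U.add_mem hx hv, by simpa using L.add_mem hxL hvL⟩

theorem ncard_setOf_sub_mem {K V : Type*} [DivisionRing K] [AddCommGroup V] [Module K V]
    (U : Submodule K V) [Module.Finite K U] (v : V) :
    {x | x - v ∈ U}.ncard = Nat.card K ^ finrank K U := by
  rw [← Module.natCard_eq_pow_finrank, ← Nat.card_coe_set_eq]
  exact Nat.card_congr (Equiv.subtypeEquiv (Equiv.subRight v) fun _ => Iff.rfl)

theorem periodic_inter_subspace_design_general
    {Fq Fqn : Type*} [Field Fq] [Field Fqn] [Algebra Fq Fqn] [Fintype Fq] [Fintype Fqn]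
    (q s A m k : ℕ)
    (hcardq : Fintype.card Fq = q)
    (H : Fin k → Submodule Fq (Fin m → Fqn))
    (hdesign : ∀ W : Submodule Fqn (Fin m → Fqn), Module.finrank Fqn W ≤ s →
      ∑ i, Module.finrank Fq ↥(H i ⊓ W.restrictScalars Fq) ≤ A)
    (S : Set (Fin k → Fin m → Fqn))
    (haff : ∃ (v : Fin k → Fin m → Fqn) (U : Submodule Fqn (Fin k → Fin m → Fqn)),
      S = {x | x - v ∈ U})
    (hper : ∃ W0 : Submodule Fqn (Fin m → Fqn), Module.finrank Fqn W0 ≤ s ∧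
      ∀ j : Fin k, ∀ x ∈ S, ∀ x' ∈ S,
        (∀ i : Fin k, i < j → x i = x' i) → x j - x' j ∈ W0)
    (T : Set (Fin k → Fin m → Fqn)) (hT : T = S ∩ {x | ∀ i, x i ∈ H i}) :
    (T = ∅ ∨ ∃ (v : Fin k → Fin m → Fqn) (U : Submodule Fq (Fin k → Fin m → Fqn)),
        Module.finrank Fq U ≤ A ∧ T = {x | x - v ∈ U}) ∧
    T.ncard ≤ q ^ A := by
  obtain ⟨v₀, U, rfl⟩ := haff
  obtain ⟨W₀, hW₀, hper⟩ := hper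
  rcases T.eq_empty_or_nonempty with hempty | ⟨v, hv⟩
  · simp [hempty]
  have hpi : {x | ∀ i, x i ∈ H i} = (Submodule.pi Set.univ H : Set (Fin k → Fin m → Fqn)) := by
    ext x
    simp
  rw [hpi] at hT
  have hvS : v - v₀ ∈ U := (hT ▸ hv).1
  set L := U.restrictScalars Fq ⊓ Submodule.pi Set.univ H
  have hTL : T = {x | x - v ∈ L} :=
    hT.trans (setOf_sub_mem_inter_eq (U.restrictScalars Fq) _ hvS (hT ▸ hv).2)
  -- `v + u` and `v` lie in `S` and agree before `j`.
  have hprefix : ∀ u ∈ L, ∀ j, (∀ i < j, u i = 0) → u j ∈ H j ⊓ W₀.restrictScalars Fq := by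
    intro u hu j hzero
    have hvu : v + u - v₀ ∈ U := by simpa [add_sub_right_comm] using U.add_mem hvS hu.1
    refine ⟨hu.2 j (Set.mem_univ j), ?_⟩
    simpa using hper j (v + u) hvu v hvS fun i hi => by simp [hzero i hi]
  have hdim : Module.finrank Fq L ≤ A :=
    (finrank_le_sum_finrank_of_prefix_zero _ L hprefix).trans (hdesign W₀ hW₀)
  refine ⟨Or.inr ⟨v, L, hdim, hTL⟩, ?_⟩
  rw [hTL, ncard_setOf_sub_mem, Nat.card_eq_fintype_card, hcardq]
  exact Nat.pow_le_pow_right (hcardq ▸ Fintype.card_pos) hdim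

/-- Intersecting an `(s,m,k)`-periodic affine subspace with a
product of subspaces from an `(s,A,n)` subspace design gives an affine
`𝔽_q`-subspace of dimension at most `A`, hence of size at most `q^A`. -/
theorem periodic_inter_subspace_design
    {Fq Fqn : Type*} [Field Fq] [Field Fqn] [Algebra Fq Fqn] [Fintype Fq] [Fintype Fqn]
    (q s A m n k : ℕ) (hq : IsPrimePow q)
    (hs : 1 ≤ s) (hA : 1 ≤ A) (hm : 1 ≤ m) (hn : 1 ≤ n) (hk : 1 ≤ k)
    (hcardq : Fintype.card Fq = q) (hcardqn : Fintype.card Fqn = q ^ n)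
    (H : Fin k → Submodule Fq (Fin m → Fqn))
    (hdesign : ∀ W : Submodule Fqn (Fin m → Fqn), Module.finrank Fqn W ≤ s →
      ∑ i, Module.finrank Fq ↥(H i ⊓ W.restrictScalars Fq) ≤ A)
    (S : Set (Fin k → Fin m → Fqn))
    (haff : ∃ (v : Fin k → Fin m → Fqn) (U : Submodule Fqn (Fin k → Fin m → Fqn)),
      S = {x | x - v ∈ U})
    (hper : ∃ W0 : Submodule Fqn (Fin m → Fqn), Module.finrank Fqn W0 ≤ s ∧
      ∀ j : Fin k, ∀ x ∈ S, ∀ x' ∈ S,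
        (∀ i : Fin k, i < j → x i = x' i) → x j - x' j ∈ W0)
    (T : Set (Fin k → Fin m → Fqn)) (hT : T = S ∩ {x | ∀ i, x i ∈ H i}) :
    (T = ∅ ∨ ∃ (v : Fin k → Fin m → Fqn) (U : Submodule Fq (Fin k → Fin m → Fqn)),
        Module.finrank Fq U ≤ A ∧ T = {x | x - v ∈ U}) ∧
    T.ncard ≤ q ^ A :=
  periodic_inter_subspace_design_general q s A m k hcardq H hdesign S haff hper T hT
end
end

section
/- Let ℓ ≥ 1 and n_1,…,n_ℓ ≥ 1 with n := n_1 + ⋯ + n_ℓ (and t = nm). Let a_1,…,a_ℓ ∈ F, β_{i,j} ∈ F and y_{i,j} ∈ F (1 ≤ i ≤ ℓ, 1 ≤ j ≤ n_i) be arbitrary, let 1 ≤ k ≤ n and s ≥ 1, and set D := ⌊(n−k+1)/(s+1)⌋. Then there exist coefficient vectors Q_0 ∈ F^{D+k} and Q_1,…,Q_s ∈ F^{D+1}, not all zero, such that Q_0(β_{i,j})_{a_i} + Σ_{r=1}^{s} Q_r(y_{i,j}^{q^{r−1}})_{a_i} = 0 for all i and j. -/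
noncomputable section

open Finset

variable {F : Type*} [Field F]

/-!
Finding `Q_0, …, Q_s` is solving a homogeneous linear system: operator evaluation is linear in
the coefficient vector, so each of the `n` interpolation conditions is one linear equation in the
`(D + k) + s (D + 1)` unknown coefficients. The choice `D = ⌊(n - k + 1)/(s + 1)⌋` makes the
number of unknowns exceed `n`, so the system has a nonzero solution.
-/

@[simps]
def opEvalLinearMap (e : ℕ) {k : ℕ} (a b : F) : (Fin k → F) →ₗ[F] F where
  toFun f := opEval e f a b
  map_add' f g := by simp only [opEval, Pi.add_apply, add_mul, sum_add_distrib]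
  map_smul' c f := by simp only [opEval, Pi.smul_apply, smul_eq_mul, mul_sum, mul_assoc,
    RingHom.id_apply]

def interpolationMap (e : ℕ) {ι : Type*} (k₀ k₁ s : ℕ) (a b : ι → F)
    (c : ι → Fin s → F) :
    ((Fin k₀ → F) × (Fin s → Fin k₁ → F)) →ₗ[F] (ι → F) :=
  LinearMap.pi fun i => (opEvalLinearMap e (a i) (b i)).comp (LinearMap.fst F _ _) +
    ∑ r, ((opEvalLinearMap e (a i) (c i r)).comp (LinearMap.proj r)).comp (LinearMap.snd F _ _)

theorem interpolationMap_apply (e : ℕ) {ι : Type*} (k₀ k₁ s : ℕ) (a b : ι → F)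
    (c : ι → Fin s → F) (Q : (Fin k₀ → F) × (Fin s → Fin k₁ → F)) (i : ι) :
    interpolationMap e k₀ k₁ s a b c Q i =
      opEval e Q.1 (a i) (b i) + ∑ r, opEval e (Q.2 r) (a i) (c i r) := by
  simp [interpolationMap, LinearMap.sum_apply]

theorem exists_ne_zero_interpolationMap_eq_zero (e : ℕ) {ι : Type*} [Fintype ι]
    (k₀ k₁ s : ℕ) (a b : ι → F) (c : ι → Fin s → F)
    (hlt : Fintype.card ι < k₀ + s * k₁) :
    ∃ Q ≠ 0, interpolationMap e k₀ k₁ s a b c Q = 0 := by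
  have hker : LinearMap.ker (interpolationMap e k₀ k₁ s a b c) ≠ ⊥ :=
    LinearMap.ker_ne_bot_of_finrank_lt <| by
      simpa [Module.finrank_prod, Module.finrank_pi_fintype] using hlt
  obtain ⟨Q, hQ, hQ0⟩ := (Submodule.ne_bot_iff _).mp hker
  exact ⟨Q, hQ0, hQ⟩

theorem lt_sub_add_one_div_add_add_mul (n k s : ℕ) :
    n < (n - k + 1) / (s + 1) + k + s * ((n - k + 1) / (s + 1) + 1) := by
  set D := (n - k + 1) / (s + 1)
  have hdiv : (s + 1) * D + (n - k + 1) % (s + 1) = n - k + 1 := Nat.div_add_mod _ _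
  have hmod : (n - k + 1) % (s + 1) < s + 1 := Nat.mod_lt _ s.succ_pos
  have hexpand : D + k + s * (D + 1) = (s + 1) * D + k + s := by ring
  omega

theorem lrs_interpolation_exists_general
    {F : Type*} [Field F]
    (h n : ℕ)
    (ell : ℕ) (nn : Fin ell → ℕ)
    (hsum : n = ∑ i, nn i)
    (a : Fin ell → F) (β y : ∀ i, Fin (nn i) → F)
    (k s : ℕ) :
    ∃ (Q0 : Fin ((n - k + 1) / (s + 1) + k) → F)
      (Q : Fin s → Fin ((n - k + 1) / (s + 1) + 1) → F),
      ¬(Q0 = 0 ∧ Q = 0) ∧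
      ∀ i j, opEval h Q0 (a i) (β i j) +
          ∑ r : Fin s, opEval h (Q r) (a i) (y i j ^ (h ^ n) ^ (r : ℕ)) = 0 := by
  set D := (n - k + 1) / (s + 1)
  have hcard : Fintype.card (Σ i, Fin (nn i)) = n := by simp [hsum]
  have hlt : Fintype.card (Σ i, Fin (nn i)) < (D + k) + s * (D + 1) :=
    hcard ▸ lt_sub_add_one_div_add_add_mul n k s
  obtain ⟨⟨Q0, Q⟩, hne, hQ⟩ := exists_ne_zero_interpolationMap_eq_zero h (D + k) (D + 1) s
    (fun ij : Σ i, Fin (nn i) => a ij.1) (fun ij => β ij.1 ij.2)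
    (fun ij r => y ij.1 ij.2 ^ (h ^ n) ^ (r : ℕ)) hlt
  refine ⟨Q0, Q, fun ⟨h0, h1⟩ => hne (Prod.ext h0 h1), fun i j => ?_⟩
  simpa [interpolationMap_apply] using congrFun hQ ⟨i, j⟩

/-- Existence of a nonzero interpolation skew polynomial
`Q = Q_0 + Q_1 y_1 + ⋯ + Q_s y_s` with `deg Q_0 ≤ D + k − 1`, `deg Q_r ≤ D`,
vanishing at all interpolation constraints of the received word. -/
theorem lrs_interpolation_exists
    {F : Type*} [Field F] [Fintype F]
    (h n m : ℕ) (hh : IsPrimePow h) (hn : 1 ≤ n) (hm : 1 ≤ m)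
    (hcard : Fintype.card F = h ^ (n * m))
    (ell : ℕ) (hell : 1 ≤ ell) (nn : Fin ell → ℕ) (hnn : ∀ i, 1 ≤ nn i)
    (hsum : n = ∑ i, nn i)
    (a : Fin ell → F) (β y : ∀ i, Fin (nn i) → F)
    (k s : ℕ) (hk1 : 1 ≤ k) (hkn : k ≤ n) (hs : 1 ≤ s) :
    ∃ (Q0 : Fin ((n - k + 1) / (s + 1) + k) → F)
      (Q : Fin s → Fin ((n - k + 1) / (s + 1) + 1) → F),
      ¬(Q0 = 0 ∧ Q = 0) ∧
      ∀ i j, opEval h Q0 (a i) (β i j) +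
          ∑ r : Fin s, opEval h (Q r) (a i) (y i j ^ (h ^ n) ^ (r : ℕ)) = 0 :=
  lrs_interpolation_exists_general h n ell nn hsum a β y k s
end
end

section
/- Let 1 ≤ s ≤ m and let Q_0, Q_1, …, Q_s be coefficient vectors over F, not all zero, and let k ≥ 1. Let Sol := { f ∈ F^k : Q_0 + Σ_{j=1}^{s} Q_j·f^{(q^{j−1})} = 0 }, where · denotes the skew product. Then Sol is either empty or a coset of an 𝔽_h-linear subspace of F^k, and there exists an 𝔽_q-linear subspace W ⊆ F with dim_{𝔽_q} W ≤ s − 1 such that for every r ∈ {0,…,k−1} and all f, f′ ∈ Sol with f_i = f′_i for all i < r, one has f_r − f′_r ∈ W; that is, Sol is an (s−1, m, k)-periodic subspace over 𝔽_q. -/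
noncomputable section

open Finset

variable {F : Type*} [Field F]

/-! Over `𝔽_h` the map `f ↦ Σ_j Q_j · f^{(q^j)}` is linear, since `x ↦ x^h` is the `𝔽_h`-Frobenius,
so the solution set is a fibre of a linear map. For the periodicity, let `N` be the least index
at which some `Q_j` has a nonzero coefficient `c_j`. If two solutions agree below `r`, then
coefficient `r + N` of the equation for their difference involves coordinate `r` only, and says
that `x = f_r - f'_r` satisfies `P(x^{h^N}) = 0` for the nonzero `q`-polynomial
`P = Σ_j c_j X^{q^j}`. These `x` form an `𝔽_q`-subspace which `x ↦ x^{h^N}` maps injectively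
into the roots of `P`, so it has at most `deg P ≤ q^{s-1}` elements. If all `Q_j` vanish, then
`Q_0 ≠ 0` and there are no solutions. -/

theorem FiniteField.frobeniusAlgHom_pow_apply (K : Type*) {R : Type*} [Field K] [Fintype K]
    [CommRing R] [Algebra K R] (N : ℕ) (x : R) :
    (frobeniusAlgHom K R ^ N) x = x ^ Fintype.card K ^ N := by
  rw [AlgHom.coe_pow, coe_frobeniusAlgHom, pow_iterate]

theorem LinearMap.setOf_apply_eq_eq_empty_or_sub_mem_ker {R M N : Type*} [Ring R]
    [AddCommGroup M] [AddCommGroup N] [Module R M] [Module R N] (L : M →ₗ[R] N) (b : N) :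
    {x | L x = b} = ∅ ∨ ∃ v, {x | L x = b} = {x | x - v ∈ LinearMap.ker L} := by
  refine (Set.eq_empty_or_nonempty _).imp_right fun ⟨v, hv⟩ => ⟨v, ?_⟩
  ext x
  simp_all [sub_eq_zero]

section CoeffFn

variable {k : ℕ}

theorem coeffFn_add (f g : Fin k → F) : coeffFn (f + g) = coeffFn f + coeffFn g := by
  ext i; by_cases hi : i < k <;> simp [coeffFn, hi]

theorem coeffFn_smul {R : Type*} [SMulZeroClass R F] (c : R) (f : Fin k → F) :
    coeffFn (c • f) = c • coeffFn f := by
  ext i; by_cases hi : i < k <;> simp [coeffFn, hi]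

theorem coeffFn_comp (φ : F → F) (hφ : φ 0 = 0) (f : Fin k → F) :
    coeffFn (fun i => φ (f i)) = fun i => φ (coeffFn f i) := by
  ext i; by_cases hi : i < k <;> simp [coeffFn, hi, hφ]

end CoeffFn

section QPolynomial

open Polynomial FiniteField

def qPolynomial {R : Type*} [Semiring R] (q : ℕ) {s : ℕ} (c : Fin s → R) : R[X] :=
  ∑ j : Fin s, C (c j) * X ^ q ^ (j : ℕ)

variable {R : Type*} [Semiring R] {q s : ℕ}

theorem eval_qPolynomial (c : Fin s → R) (y : R) :
    (qPolynomial q c).eval y = ∑ j : Fin s, c j * y ^ q ^ (j : ℕ) := by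
  simp [qPolynomial, eval_finsetSum]

theorem qPolynomial_ne_zero (hq : 1 < q) {c : Fin s → R} (hc : c ≠ 0) : qPolynomial q c ≠ 0 := by
  obtain ⟨j₀, hj₀⟩ := Function.ne_iff.mp hc
  intro h
  apply hj₀
  have hcoeff := congrArg (coeff · (q ^ (j₀ : ℕ))) h
  simp only [qPolynomial, finsetSum_coeff, coeff_C_mul_X_pow, coeff_zero] at hcoeff
  rwa [sum_eq_single j₀
    (fun j _ hj => if_neg fun he => hj (Fin.ext (Nat.pow_right_injective hq he).symm))
    (by simp), if_pos rfl] at hcoeff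

theorem natDegree_qPolynomial_le (hq : 0 < q) (c : Fin s → R) :
    (qPolynomial q c).natDegree ≤ q ^ (s - 1) := by
  refine natDegree_sum_le_of_forall_le _ _ fun j _ => (natDegree_C_mul_X_pow_le _ _).trans ?_
  exact Nat.pow_le_pow_right hq (by omega)

variable {K : Type*} [Field K] [Fintype K] [Algebra K F]

theorem eval_qPolynomial_card (c : Fin s → F) (y : F) :
    (qPolynomial (Fintype.card K) c).eval y =
      ∑ j : Fin s, c j * (frobeniusAlgHom K F ^ (j : ℕ)) y := by
  simp [eval_qPolynomial, frobeniusAlgHom_pow_apply]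

theorem eval_qPolynomial_card_add (c : Fin s → F) (y z : F) :
    (qPolynomial (Fintype.card K) c).eval (y + z) =
      (qPolynomial (Fintype.card K) c).eval y + (qPolynomial (Fintype.card K) c).eval z := by
  simp only [eval_qPolynomial_card, map_add, mul_add, sum_add_distrib]

theorem eval_qPolynomial_card_smul (c : Fin s → F) (d : K) (y : F) :
    (qPolynomial (Fintype.card K) c).eval (d • y) =
      d • (qPolynomial (Fintype.card K) c).eval y := by
  simp only [eval_qPolynomial_card, map_smul, mul_smul_comm, smul_sum]

variable (K) (L : Type*) [Field L] [Fintype L] [Algebra L F]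

def twistedRootSpace (c : Fin s → F) (N : ℕ) : Submodule K F where
  carrier := {x | (qPolynomial (Fintype.card K) c).eval ((frobeniusAlgHom L F ^ N) x) = 0}
  add_mem' {x y} hx hy := by
    simp only [Set.mem_ofPred_eq, map_add, eval_qPolynomial_card_add] at hx hy ⊢
    rw [hx, hy, add_zero]
  zero_mem' := by simp [eval_qPolynomial_card]
  smul_mem' d x hx := by
    have hd : (frobeniusAlgHom L F ^ N) (d • x) =
        d ^ Fintype.card L ^ N • (frobeniusAlgHom L F ^ N) x := by
      rw [Algebra.smul_def, map_mul, frobeniusAlgHom_pow_apply L N (algebraMap K F d), ← map_pow,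
        ← Algebra.smul_def]
    simp only [Set.mem_ofPred_eq, hd, eval_qPolynomial_card_smul] at hx ⊢
    rw [hx, smul_zero]

variable {K L}

theorem mem_twistedRootSpace {c : Fin s → F} {N : ℕ} {x : F} :
    x ∈ twistedRootSpace K L c N ↔
      (qPolynomial (Fintype.card K) c).eval ((frobeniusAlgHom L F ^ N) x) = 0 :=
  Iff.rfl

theorem finrank_twistedRootSpace_le {c : Fin s → F} (hc : c ≠ 0) (N : ℕ) :
    Module.finrank K (twistedRootSpace K L c N) ≤ s - 1 := by
  classical
  set W := twistedRootSpace K L c N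
  set P := qPolynomial (Fintype.card K) c
  set τ := frobeniusAlgHom L F ^ N
  have hτ : Function.Injective τ := τ.toRingHom.injective
  have hmaps : ∀ x ∈ (W : Set F), τ x ∈ (P.roots.toFinset : Set F) :=
    fun x hx => Multiset.mem_toFinset.mpr <|
      (mem_roots (qPolynomial_ne_zero Fintype.one_lt_card hc)).mpr (mem_twistedRootSpace.mp hx)
  have hcard : Nat.card W ≤ Fintype.card K ^ (s - 1) := calc
    _ = (W : Set F).ncard := Nat.card_coe_set_eq _
    _ ≤ (P.roots.toFinset : Set F).ncard :=
      Set.ncard_le_ncard_of_injOn τ hmaps hτ.injOn (finite_toSet _)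
    _ = P.roots.toFinset.card := Set.ncard_coe_finset _
    _ ≤ P.natDegree := (Multiset.toFinset_card_le _).trans P.card_roots'
    _ ≤ _ := natDegree_qPolynomial_le Fintype.card_pos c
  have : Finite W := ((finite_toSet _).preimage hτ.injOn |>.subset hmaps).to_subtype
  rw [Module.natCard_eq_pow_finrank (K := K), Nat.card_eq_fintype_card] at hcard
  exact (Nat.pow_le_pow_iff_right Fintype.one_lt_card).mp hcard

end QPolynomial

section KeyEquation

open FiniteField

variable (K : Type*) [Field K] [Fintype K] [Algebra K F]

theorem skewMul_coeffFn_pow (n j r : ℕ) (a : ℕ → F) {k : ℕ} (f : Fin k → F) :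
    skewMul (Fintype.card K) a (coeffFn fun i => f i ^ (Fintype.card K ^ n) ^ j) r =
      ∑ i ∈ range (r + 1), a i * (frobeniusAlgHom K F ^ (i + n * j)) (coeffFn f (r - i)) := by
  have htwist : (coeffFn fun i => f i ^ (Fintype.card K ^ n) ^ j) =
      fun u => (frobeniusAlgHom K F ^ (n * j)) (coeffFn f u) := by
    rw [← coeffFn_comp _ (map_zero _)]
    simp_rw [frobeniusAlgHom_pow_apply, pow_mul]
  simp only [skewMul, htwist, pow_add, AlgHom.mul_apply, frobeniusAlgHom_pow_apply]

/-- The linear part `f ↦ Σ_j Q_j · f^{(q^j)}` of the key equation, for `σ(x) = x^{|K|}` and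
`q = |K|^n`; it is `K`-linear because `σ` fixes `K`. -/
def keyEquationMap (n : ℕ) {s k : ℕ} (len : Fin s → ℕ) (Q : ∀ j : Fin s, Fin (len j) → F) :
    (Fin k → F) →ₗ[K] ℕ → F where
  toFun f r := ∑ j : Fin s, skewMul (Fintype.card K) (coeffFn (Q j))
    (coeffFn fun i => f i ^ (Fintype.card K ^ n) ^ (j : ℕ)) r
  map_add' f g := by
    ext r
    simp only [skewMul_coeffFn_pow, coeffFn_add]
    simp only [Pi.add_apply, map_add, mul_add, sum_add_distrib]
  map_smul' c f := by
    ext r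
    simp only [skewMul_coeffFn_pow, coeffFn_smul]
    simp only [Pi.smul_apply, map_smul, mul_smul_comm, smul_sum, RingHom.id_apply]

variable {K} {n s k : ℕ} {len : Fin s → ℕ} {Q : ∀ j : Fin s, Fin (len j) → F}

theorem keyEquationMap_apply (f : Fin k → F) (r : ℕ) :
    keyEquationMap K n len Q f r = ∑ j : Fin s, skewMul (Fintype.card K) (coeffFn (Q j))
      (coeffFn fun i => f i ^ (Fintype.card K ^ n) ^ (j : ℕ)) r :=
  rfl

theorem keyEquationMap_eq_zero (hQ : ∀ j, coeffFn (Q j) = 0) :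
    keyEquationMap K n len Q = (0 : (Fin k → F) →ₗ[K] ℕ → F) := by
  ext f r
  simp [keyEquationMap_apply, skewMul, hQ]

theorem keyEquationMap_apply_add_of_forall_lt {N : ℕ} (hQ : ∀ j, ∀ i < N, coeffFn (Q j) i = 0)
    {g : Fin k → F} {r : Fin k} (hg : ∀ i : Fin k, (i : ℕ) < r → g i = 0) :
    keyEquationMap K n len Q g (r + N) =
      (qPolynomial (Fintype.card K ^ n) fun j => coeffFn (Q j) N).eval
        (g r ^ Fintype.card K ^ N) := by
  have hg' : ∀ u < (r : ℕ), coeffFn g u = 0 := fun u hu => by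
    simp [coeffFn, u.lt_trans hu r.isLt, hg ⟨u, _⟩ hu]
  rw [eval_qPolynomial, keyEquationMap_apply]
  refine sum_congr rfl fun j _ => ?_
  rw [skewMul_coeffFn_pow, sum_eq_single N]
  · rw [Nat.add_sub_cancel, show coeffFn g r = g r from dif_pos r.isLt, frobeniusAlgHom_pow_apply]
    simp only [← pow_mul, ← pow_add]
  · intro i hi hiN
    rcases hiN.lt_or_gt with hlt | hgt
    · rw [hQ j i hlt, zero_mul]
    · rw [hg' _ (by simp at hi; omega), map_zero, mul_zero]
  · simp

end KeyEquation

theorem lrs_solution_space_periodic_general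
    {Fh Fq F : Type*} [Field Fh] [Field Fq] [Field F]
    [Algebra Fq F] [Algebra Fh F]
    [Fintype Fh] [Fintype Fq]
    (h n : ℕ)
    (hcardh : Fintype.card Fh = h) (hcardq : Fintype.card Fq = h ^ n)
    (s : ℕ) (k : ℕ)
    (K0 : ℕ) (Q0 : Fin K0 → F) (K : Fin s → ℕ) (Q : ∀ j : Fin s, Fin (K j) → F)
    (hQ : ¬(coeffFn Q0 = 0 ∧ ∀ j, coeffFn (Q j) = 0))
    (Sol : Set (Fin k → F))
    (hSol : Sol = {f | ∀ r : ℕ, coeffFn Q0 r +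
        ∑ j : Fin s,
          skewMul h (coeffFn (Q j)) (coeffFn fun i => f i ^ (h ^ n) ^ (j : ℕ)) r = 0}) :
    (Sol = ∅ ∨ ∃ (v : Fin k → F) (U : Submodule Fh (Fin k → F)),
        Sol = {f | f - v ∈ U}) ∧
    ∃ W : Submodule Fq F, Module.finrank Fq W ≤ s - 1 ∧
      ∀ r : Fin k, ∀ f ∈ Sol, ∀ f' ∈ Sol,
        (∀ i : Fin k, (i : ℕ) < (r : ℕ) → f i = f' i) → f r - f' r ∈ W := by
  classical
  subst hcardh
  set E := keyEquationMap Fh n K Q (k := k)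
  obtain rfl : Sol = {f | E f = -coeffFn Q0} := by
    ext f
    simp [hSol, E, funext_iff, keyEquationMap_apply, eq_neg_iff_add_eq_zero, add_comm]
  refine ⟨(E.setOf_apply_eq_eq_empty_or_sub_mem_ker _).imp_right fun ⟨v, hv⟩ => ⟨v, _, hv⟩, ?_⟩
  by_cases hQj : ∃ i j, coeffFn (Q j) i ≠ 0
  · set N := Nat.find hQj
    have hQN : ∀ j, ∀ i < N, coeffFn (Q j) i = 0 := fun j i hi =>
      not_not.mp fun hne => Nat.find_min hQj hi ⟨j, hne⟩
    refine ⟨twistedRootSpace Fq Fh (fun j => coeffFn (Q j) N) N,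
      finrank_twistedRootSpace_le (Function.ne_iff.mpr (Nat.find_spec hQj)) N,
      fun r f (hf : E f = _) f' (hf' : E f' = _) hpre => ?_⟩
    have hlead := keyEquationMap_apply_add_of_forall_lt (K := Fh) (n := n) hQN (g := f - f')
      (r := r) fun i hi => sub_eq_zero.mpr (hpre i hi)
    rw [map_sub, hf, hf', sub_self] at hlead
    rw [mem_twistedRootSpace, FiniteField.frobeniusAlgHom_pow_apply, hcardq]
    exact hlead.symm
  · push Not at hQj
    have hE0 : E = 0 := keyEquationMap_eq_zero fun j => funext fun i => hQj i j
    have hQ0 : coeffFn Q0 ≠ 0 := fun h0 => hQ ⟨h0, fun j => funext fun i => hQj i j⟩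
    refine ⟨⊥, by simp, fun r f (hf : E f = _) => absurd hf ?_⟩
    simpa [hE0, eq_comm] using hQ0

/-- Structure of the solution space of the key equation: the
set of `f ∈ F^k` with `Q_0 + Σ_j Q_j · f^{(q^{j−1})} = 0` is empty or a coset of
an `𝔽_h`-subspace, and it is `(s−1, m, k)`-periodic over `𝔽_q`: there is an
`𝔽_q`-subspace `W ⊆ F` of dimension ≤ `s − 1` controlling each coordinate given
any fixed prefix. -/
theorem lrs_solution_space_periodic
    {Fh Fq F : Type*} [Field Fh] [Field Fq] [Field F]
    [Algebra Fh Fq] [Algebra Fq F] [Algebra Fh F] [IsScalarTower Fh Fq F]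
    [Fintype Fh] [Fintype Fq] [Fintype F]
    (h n m : ℕ) (hh : IsPrimePow h) (hn : 1 ≤ n) (hm : 1 ≤ m)
    (hcardh : Fintype.card Fh = h) (hcardq : Fintype.card Fq = h ^ n)
    (hcardF : Fintype.card F = h ^ (n * m))
    (s : ℕ) (hs1 : 1 ≤ s) (hsm : s ≤ m) (k : ℕ) (hk : 1 ≤ k)
    (K0 : ℕ) (Q0 : Fin K0 → F) (K : Fin s → ℕ) (Q : ∀ j : Fin s, Fin (K j) → F)
    (hQ : ¬(coeffFn Q0 = 0 ∧ ∀ j, coeffFn (Q j) = 0))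
    (Sol : Set (Fin k → F))
    (hSol : Sol = {f | ∀ r : ℕ, coeffFn Q0 r +
        ∑ j : Fin s,
          skewMul h (coeffFn (Q j)) (coeffFn fun i => f i ^ (h ^ n) ^ (j : ℕ)) r = 0}) :
    (Sol = ∅ ∨ ∃ (v : Fin k → F) (U : Submodule Fh (Fin k → F)),
        Sol = {f | f - v ∈ U}) ∧
    ∃ W : Submodule Fq F, Module.finrank Fq W ≤ s - 1 ∧
      ∀ r : Fin k, ∀ f ∈ Sol, ∀ f' ∈ Sol,
        (∀ i : Fin k, (i : ℕ) < (r : ℕ) → f i = f' i) → f r - f' r ∈ W :=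
  lrs_solution_space_periodic_general h n hcardh hcardq s k K0 Q0 K Q hQ Sol hSol
end
end

section
/- Let s ≥ 1, let γ be a primitive element of F = 𝔽_{q^m}, let k ≥ 1, and let Q_0, Q_1, …, Q_s be coefficient vectors over F. Write (Q_j)_0 for the constant (index-0) coefficient of Q_j and set R_0(x) := Σ_{j=1}^{s} (Q_j)_0·x^{j−1} ∈ F[x]. Let r ∈ {0,…,k−1} be such that R_0(γ^{q^r}) ≠ 0. If f, f′ ∈ F^k both satisfy Q_0 + Σ_{j=1}^{s} Q_j·f·γ^{j−1} = 0 and Q_0 + Σ_{j=1}^{s} Q_j·f′·γ^{j−1} = 0 (skew products), and f_i = f′_i for all i < r, then f_r = f′_r. -/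
noncomputable section

open Finset

variable {F : Type*} [Field F]

/-!
At coordinate `r` of the key equation, every term of the skew product `Q_j · (f·γ^j)` except the
one with `Q_j`'s constant coefficient only involves coordinates of `f` below `r`. Subtracting the
equations for `f` and `f'` therefore leaves `(f_r − f'_r) · R_0(γ^{q^r}) = 0`.
-/

theorem coeffFn_fin {k : ℕ} (f : Fin k → F) (i : Fin k) : coeffFn f i = f i := by
  simp [coeffFn]

theorem coeffFn_eq_of_lt {k n : ℕ} {f f' : Fin k → F}
    (h : ∀ i : Fin k, (i : ℕ) < n → f i = f' i) : ∀ i < n, coeffFn f i = coeffFn f' i := by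
  intro i hi
  unfold coeffFn
  split_ifs with hik
  · exact h ⟨i, hik⟩ hi
  · rfl

theorem skewMul_sub_skewMul_of_eq_of_lt (e : ℕ) (P g g' : ℕ → F) {n : ℕ}
    (h : ∀ i < n, g i = g' i) :
    skewMul e P g n - skewMul e P g' n = P 0 * (g n - g' n) := by
  unfold skewMul
  rw [← sum_sub_distrib, sum_range_succ',
    sum_eq_zero fun i hi => by rw [h (n - (i + 1)) (by have := mem_range.1 hi; omega), sub_self]]
  simp [mul_sub]

theorem flrs_coordinate_determined_general
    {F : Type*} [Field F]
    (q : ℕ)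
    (s : ℕ)
    (γ : F) (k : ℕ)
    (K0 : ℕ) (Q0 : Fin K0 → F) (K : Fin s → ℕ) (Q : ∀ j : Fin s, Fin (K j) → F)
    (r : Fin k)
    (hR : ∑ j : Fin s, coeffFn (Q j) 0 * (γ ^ q ^ (r : ℕ)) ^ (j : ℕ) ≠ 0)
    (f f' : Fin k → F)
    (hf : ∀ ρ : ℕ, coeffFn Q0 ρ +
        ∑ j : Fin s,
          skewMul q (coeffFn (Q j))
            (coeffFn fun i : Fin k => f i * (γ ^ (j : ℕ)) ^ q ^ (i : ℕ)) ρ = 0)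
    (hf' : ∀ ρ : ℕ, coeffFn Q0 ρ +
        ∑ j : Fin s,
          skewMul q (coeffFn (Q j))
            (coeffFn fun i : Fin k => f' i * (γ ^ (j : ℕ)) ^ q ^ (i : ℕ)) ρ = 0)
    (hagree : ∀ i : Fin k, (i : ℕ) < (r : ℕ) → f i = f' i) :
    f r = f' r := by
  have hdiff : ∀ j : Fin s,
      skewMul q (coeffFn (Q j))
          (coeffFn fun i : Fin k => f i * (γ ^ (j : ℕ)) ^ q ^ (i : ℕ)) r
        - skewMul q (coeffFn (Q j))
          (coeffFn fun i : Fin k => f' i * (γ ^ (j : ℕ)) ^ q ^ (i : ℕ)) r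
      = (f r - f' r) * (coeffFn (Q j) 0 * (γ ^ q ^ (r : ℕ)) ^ (j : ℕ)) := by
    intro j
    rw [skewMul_sub_skewMul_of_eq_of_lt _ _ _ _
        (coeffFn_eq_of_lt fun i hi => by rw [hagree i hi]),
      coeffFn_fin, coeffFn_fin, ← pow_mul, ← pow_mul, mul_comm (j : ℕ)]
    ring
  have hzero : (f r - f' r) * ∑ j : Fin s, coeffFn (Q j) 0 * (γ ^ q ^ (r : ℕ)) ^ (j : ℕ) = 0 := by
    rw [mul_sum, ← sum_congr rfl fun j _ => hdiff j, sum_sub_distrib]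
    linear_combination hf r - hf' r
  exact sub_eq_zero.1 ((mul_eq_zero.1 hzero).resolve_right hR)

/-- If `R_0(γ^{q^r}) ≠ 0`, where
`R_0(x) = Σ_{j=1}^s (Q_j)_0 x^{j−1}`, then any two solutions of the FLRS key
equation agreeing on all coordinates below `r` also agree at coordinate `r`. -/
theorem flrs_coordinate_determined
    {F : Type*} [Field F] [Fintype F]
    (q m : ℕ) (hq : IsPrimePow q) (hm : 1 ≤ m)
    (hcard : Fintype.card F = q ^ m)
    (s : ℕ) (hs : 1 ≤ s)
    (γ : F) (hprim : IsPrimitive γ) (k : ℕ) (hk : 1 ≤ k)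
    (K0 : ℕ) (Q0 : Fin K0 → F) (K : Fin s → ℕ) (Q : ∀ j : Fin s, Fin (K j) → F)
    (r : Fin k)
    (hR : ∑ j : Fin s, coeffFn (Q j) 0 * (γ ^ q ^ (r : ℕ)) ^ (j : ℕ) ≠ 0)
    (f f' : Fin k → F)
    (hf : ∀ ρ : ℕ, coeffFn Q0 ρ +
        ∑ j : Fin s,
          skewMul q (coeffFn (Q j))
            (coeffFn fun i : Fin k => f i * (γ ^ (j : ℕ)) ^ q ^ (i : ℕ)) ρ = 0)
    (hf' : ∀ ρ : ℕ, coeffFn Q0 ρ +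
        ∑ j : Fin s,
          skewMul q (coeffFn (Q j))
            (coeffFn fun i : Fin k => f' i * (γ ^ (j : ℕ)) ^ q ^ (i : ℕ)) ρ = 0)
    (hagree : ∀ i : Fin k, (i : ℕ) < (r : ℕ) → f i = f' i) :
    f r = f' r :=
  flrs_coordinate_determined_general q s γ k K0 Q0 K Q r hR f f' hf hf' hagree
end
end
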